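/- arXiv:2509.26295 — 3 statements merged into one kernel-verified Lean document; each statement's English description precedes it below -/
import Mathlib

section
/- Let K = Q_p(μ) where μ is a primitive p-th root of unity and p is an odd prime. Then there is a unique element π ∈ K with π^{p-1} = -p and |(1+π) - μ| ≤ p^{-2/(p-1)}. -/
/-!
Write `r = ‖μ - 1‖`. From `∏_{0<i<p} (1 - μ^i) = p` and `‖1 - μ^i‖ = r` one gets `r^(p-1) = 1/p`,
and writing `μ^i - 1 = (μ - 1)(1 + μ + ⋯ + μ^(i-1))` gives `(μ - 1)^(p-1) c = -p` with
`c = (-1)^p ∏_{0<i<p} (1 + μ + ⋯ + μ^(i-1))`, and `c ≡ (-1)^p (p-1)! ≡ 1` up to norm `r` by Wilson.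
Since `p - 1` is a unit, Newton's iteration `u ↦ u - (u^(p-1) - c)/(p-1)` contracts the ball
`‖u - 1‖ ≤ r`, so `c = v^(p-1)` with `‖v - 1‖ ≤ r`, and `π = (μ - 1) v` works.
Any other solution `π'` satisfies `‖π' - π‖ ≤ r² < ‖π‖`, so `π'/π` is a `(p-1)`-st root of unity
close to `1`, hence equal to `1`.
-/

open Finset

lemma Nat.Prime.dvd_neg_one_pow_mul_factorial_sub_one {p : ℕ} (hp : p.Prime) :
    (p : ℤ) ∣ (-1) ^ p * ((p - 1).factorial : ℤ) - 1 := by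
  have := Fact.mk hp
  rw [← ZMod.intCast_zmod_eq_zero_iff_dvd]
  push_cast
  rw [ZMod.pow_card, ZMod.wilsons_lemma]
  ring

namespace IsUltrametricDist

lemma norm_sub_le_max {M : Type*} [SeminormedAddCommGroup M] [IsUltrametricDist M] (x y : M) :
    ‖x - y‖ ≤ max ‖x‖ ‖y‖ := by
  simpa [sub_eq_add_neg] using norm_add_le_max x (-y)

variable {K : Type*} [NormedField K] [IsUltrametricDist K]

lemma norm_eq_one_of_norm_sub_one_lt_one {x : K} (hx : ‖x - 1‖ < 1) : ‖x‖ = 1 := by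
  simpa [max_eq_right hx.le] using
    norm_add_eq_max_of_norm_ne_norm (x := x - 1) (y := 1) (by simpa using hx.ne)

lemma norm_le_one_of_norm_sub_one_le_one {x : K} (hx : ‖x - 1‖ ≤ 1) : ‖x‖ ≤ 1 := by
  simpa using (norm_add_le_max (x - 1) 1).trans (max_le hx norm_one.le)

lemma norm_mul_sub_one_le {x y : K} {r : ℝ} (hr : r ≤ 1) (hx : ‖x - 1‖ ≤ r)
    (hy : ‖y - 1‖ ≤ r) : ‖x * y - 1‖ ≤ r := by
  have hx1 : ‖x‖ ≤ 1 := norm_le_one_of_norm_sub_one_le_one (hx.trans hr)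
  calc ‖x * y - 1‖ = ‖x * (y - 1) + (x - 1)‖ := by ring_nf
    _ ≤ max (‖x‖ * ‖y - 1‖) ‖x - 1‖ := by rw [← norm_mul]; exact norm_add_le_max _ _
    _ ≤ r := max_le (by nlinarith [norm_nonneg x, norm_nonneg (y - 1)]) hx

lemma norm_pow_sub_one_le {x : K} {r : ℝ} (hr : r ≤ 1) (hx : ‖x - 1‖ ≤ r) (n : ℕ) :
    ‖x ^ n - 1‖ ≤ r := by
  induction n with
  | zero => simpa using (norm_nonneg _).trans hx
  | succ n ih => rw [pow_succ]; exact norm_mul_sub_one_le hr ih hx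

lemma norm_sum_sub_card_le {ι : Type*} {s : Finset ι} {f : ι → K} {r : ℝ} (hr : 0 ≤ r)
    (hf : ∀ i ∈ s, ‖f i - 1‖ ≤ r) : ‖∑ i ∈ s, f i - #s‖ ≤ r := by
  have h : ∑ i ∈ s, f i - #s = ∑ i ∈ s, (f i - 1) := by simp [sum_sub_distrib]
  exact h ▸ norm_sum_le_of_forall_le_of_nonneg hr hf

lemma norm_prod_sub_prod_le {ι : Type*} (s : Finset ι) {f g : ι → K} {r : ℝ} (hr : 0 ≤ r)
    (hf : ∀ i ∈ s, ‖f i‖ ≤ 1) (hg : ∀ i ∈ s, ‖g i‖ ≤ 1) (hfg : ∀ i ∈ s, ‖f i - g i‖ ≤ r) :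
    ‖∏ i ∈ s, f i - ∏ i ∈ s, g i‖ ≤ r := by
  induction s using Finset.cons_induction with
  | empty => simpa using hr
  | cons a s ha ih =>
    simp only [mem_cons, forall_eq_or_imp] at hf hg hfg
    have hgs : ‖∏ i ∈ s, g i‖ ≤ 1 := by rw [norm_prod]; exact prod_le_one (by simp) hg.2
    have ih := ih hf.2 hg.2 hfg.2
    rw [prod_cons, prod_cons,
      show f a * ∏ i ∈ s, f i - g a * ∏ i ∈ s, g i
        = f a * (∏ i ∈ s, f i - ∏ i ∈ s, g i) + (f a - g a) * ∏ i ∈ s, g i by ring]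
    refine (norm_add_le_max _ _).trans (max_le ?_ ?_) <;> rw [norm_mul]
    · nlinarith [norm_nonneg (f a), norm_nonneg (∏ i ∈ s, f i - ∏ i ∈ s, g i)]
    · nlinarith [norm_nonneg (f a - g a), norm_nonneg (∏ i ∈ s, g i)]

lemma eq_one_of_pow_eq_one {ζ : K} {n : ℕ} (hζ : ζ ^ n = 1) (hn : ‖(n : K)‖ = 1)
    (h : ‖ζ - 1‖ < 1) : ζ = 1 := by
  have hsum : ∑ i ∈ range n, ζ ^ i ≠ 0 := by
    intro h0
    have := norm_sum_sub_card_le (s := range n) (norm_nonneg _)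
      fun i _ => norm_pow_sub_one_le h.le le_rfl i
    rw [h0, card_range, zero_sub, norm_neg, hn] at this
    exact this.not_gt h
  have : (∑ i ∈ range n, ζ ^ i) * (ζ - 1) = 0 := by rw [geom_sum_mul, hζ, sub_self]
  exact sub_eq_zero.mp ((mul_eq_zero.mp this).resolve_left hsum)

lemma eq_of_pow_eq_pow {x y : K} {n : ℕ} (hxy : x ^ n = y ^ n) (hn : ‖(n : K)‖ = 1)
    (h : ‖x - y‖ < ‖y‖) : x = y := by
  have hy : y ≠ 0 := norm_pos_iff.mp ((norm_nonneg _).trans_lt h)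
  have h1 : x / y = 1 := by
    refine eq_one_of_pow_eq_one (by rw [div_pow, hxy, div_self (pow_ne_zero n hy)]) hn ?_
    rwa [div_sub_one hy, norm_div, div_lt_one (norm_pos_iff.mpr hy)]
  exact (div_eq_one_iff_eq hy).mp h1

lemma norm_newton_sub_newton_le {n : ℕ} (hn : ‖(n : K)‖ = 1) (c : K) {u v : K} {r : ℝ}
    (hr : r ≤ 1) (hu : ‖u - 1‖ ≤ r) (hv : ‖v - 1‖ ≤ r) :
    ‖(u - (u ^ n - c) / n) - (v - (v ^ n - c) / n)‖ ≤ r * ‖u - v‖ := by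
  have hn0 : (n : K) ≠ 0 := norm_ne_zero_iff.mp (by rw [hn]; exact one_ne_zero)
  set S := ∑ i ∈ range n, u ^ i * v ^ (n - 1 - i)
  have hS : ‖S - n‖ ≤ r := by
    simpa using norm_sum_sub_card_le (s := range n) ((norm_nonneg _).trans hu) fun i _ =>
      norm_mul_sub_one_le hr (norm_pow_sub_one_le hr hu i) (norm_pow_sub_one_le hr hv (n - 1 - i))
  have h : (u - (u ^ n - c) / n) - (v - (v ^ n - c) / n) = (u - v) * (n - S) / n := by
    field_simp
    linear_combination geom_sum₂_mul u v n
  rw [h, norm_div, hn, div_one, norm_mul, norm_sub_rev (n : K), mul_comm]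
  exact mul_le_mul_of_nonneg_right hS (norm_nonneg _)

lemma exists_pow_eq_of_norm_sub_one_le [CompleteSpace K] {n : ℕ} (hn : ‖(n : K)‖ = 1) {c : K}
    {r : ℝ} (hr : r < 1) (hc : ‖c - 1‖ ≤ r) : ∃ u : K, u ^ n = c ∧ ‖u - 1‖ ≤ r := by
  have hr0 : 0 ≤ r := (norm_nonneg _).trans hc
  have hn0 : (n : K) ≠ 0 := norm_ne_zero_iff.mp (by rw [hn]; exact one_ne_zero)
  set F : K → K := fun u => u - (u ^ n - c) / n
  have hF {u v : K} := norm_newton_sub_newton_le (u := u) (v := v) hn c hr.le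
  have hmaps : Set.MapsTo F (Metric.closedBall 1 r) (Metric.closedBall 1 r) := by
    intro u hu
    rw [Metric.mem_closedBall, dist_eq_norm] at hu ⊢
    have hF1 : ‖F 1 - 1‖ ≤ r := by simpa [F, norm_sub_rev c, hn] using hc
    calc ‖F u - 1‖ = ‖(F u - F 1) + (F 1 - 1)‖ := by ring_nf
      _ ≤ r := (norm_add_le_max _ _).trans <| max_le ((hF hu (by simpa using hr0)).trans
          (mul_le_of_le_one_right hr0 (hu.trans hr.le))) hF1
  have hcontr : ContractingWith ⟨r, hr0⟩ (hmaps.restrict F _ _) := by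
    refine ⟨by exact_mod_cast hr, LipschitzWith.of_dist_le_mul fun u v => ?_⟩
    simp only [Subtype.dist_eq, Set.MapsTo.val_restrict_apply, dist_eq_norm]
    exact hF (dist_eq_norm u.1 1 ▸ u.2) (dist_eq_norm v.1 1 ▸ v.2)
  obtain ⟨u, hu, hfix, -⟩ := hcontr.exists_fixedPoint' Metric.isClosed_closedBall.isComplete
    hmaps (Metric.mem_closedBall_self hr0) (edist_ne_top _ _)
  refine ⟨u, ?_, by rwa [Metric.mem_closedBall, dist_eq_norm] at hu⟩
  have : (u ^ n - c) / n = 0 := by simpa [F, Function.IsFixedPt] using hfix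
  exact sub_eq_zero.mp ((div_eq_zero_iff.mp this).resolve_right hn0)

lemma norm_neg_one_pow_mul_factorial_sub_one_le {p : ℕ} (hp : p.Prime) :
    ‖(-1) ^ p * ((p - 1).factorial : K) - 1‖ ≤ ‖(p : K)‖ := by
  obtain ⟨d, hd⟩ := hp.dvd_neg_one_pow_mul_factorial_sub_one
  have hdK := congrArg (Int.cast : ℤ → K) hd
  push_cast at hdK
  rw [hdK, norm_mul]
  exact mul_le_of_le_one_right (norm_nonneg _) (norm_intCast_le_one K d)

lemma norm_prod_geom_sum_sub_factorial_le {x : K} (hx : ‖x - 1‖ ≤ 1) (m : ℕ) :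
    ‖∏ k ∈ range m, ∑ j ∈ range (k + 1), x ^ j - m.factorial‖ ≤ ‖x - 1‖ := by
  have hx1 := norm_le_one_of_norm_sub_one_le_one hx
  rw [← prod_range_add_one_eq_factorial]
  push_cast
  refine norm_prod_sub_prod_le _ (norm_nonneg _) (fun k _ => ?_) (fun k _ => ?_) fun k _ => ?_
  · exact norm_sum_le_of_forall_le_of_nonneg zero_le_one fun j _ => by
      simpa using pow_le_one₀ (norm_nonneg x) hx1
  · exact_mod_cast norm_natCast_le_one K (k + 1)
  · simpa using norm_sum_sub_card_le (s := range (k + 1)) (norm_nonneg _) fun j _ =>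
      norm_pow_sub_one_le hx le_rfl j

end IsUltrametricDist

open IsUltrametricDist

namespace IsPrimitiveRoot

variable {K : Type*} [NormedField K] [IsUltrametricDist K] {μ : K} {n : ℕ}

lemma norm_sub_one_le_one (hμ : IsPrimitiveRoot μ n) [NeZero n] : ‖μ - 1‖ ≤ 1 := by
  simpa [(hμ.isOfFinOrder (NeZero.ne n)).norm_eq_one] using norm_sub_le_max μ 1

lemma norm_pow_sub_one_of_coprime (hμ : IsPrimitiveRoot μ n) [NeZero n] {i : ℕ}
    (hi : i.Coprime n) : ‖μ ^ i - 1‖ = ‖μ - 1‖ := by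
  obtain ⟨k, -, hk⟩ := (hμ.pow_of_coprime i hi).eq_pow_of_pow_eq_one hμ.pow_eq_one
  have hle := norm_pow_sub_one_le hμ.norm_sub_one_le_one le_rfl i
  refine le_antisymm hle ?_
  calc ‖μ - 1‖ = ‖(μ ^ i) ^ k - 1‖ := by rw [hk]
    _ ≤ ‖μ ^ i - 1‖ := norm_pow_sub_one_le (hle.trans hμ.norm_sub_one_le_one) le_rfl k

lemma norm_sub_one_pow_eq_norm_prime {p : ℕ} (hp : p.Prime) (hμ : IsPrimitiveRoot μ p) :
    ‖μ - 1‖ ^ (p - 1) = ‖(p : K)‖ := by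
  have := Fact.mk hp
  obtain ⟨m, rfl⟩ : ∃ m, p = m + 1 := ⟨p - 1, (Nat.sub_add_cancel hp.one_le).symm⟩
  have h := congrArg norm hμ.prod_one_sub_pow_eq_order
  rw [norm_prod] at h
  push_cast
  rw [← h, prod_eq_pow_card fun k hk => ?_, card_range]
  rw [norm_sub_rev, hμ.norm_pow_sub_one_of_coprime]
  exact (Nat.coprime_of_lt_prime k.succ_ne_zero (by simpa using hk) hp).symm

lemma exists_sub_one_pow_mul_eq_neg_prime {p : ℕ} (hp : p.Prime) (hμ : IsPrimitiveRoot μ p) :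
    ∃ c : K, (μ - 1) ^ (p - 1) * c = -p ∧ ‖c - 1‖ ≤ ‖μ - 1‖ := by
  have := Fact.mk hp
  have hr1 : ‖μ - 1‖ ≤ 1 := hμ.norm_sub_one_le_one
  have hpr : ‖(p : K)‖ ≤ ‖μ - 1‖ := by
    rw [← hμ.norm_sub_one_pow_eq_norm_prime hp]
    exact pow_le_of_le_one (norm_nonneg _) hr1 (Nat.sub_ne_zero_of_lt hp.one_lt)
  have hwilson := (norm_neg_one_pow_mul_factorial_sub_one_le (K := K) hp).trans hpr
  obtain ⟨m, rfl⟩ : ∃ m, p = m + 1 := ⟨p - 1, (Nat.sub_add_cancel hp.one_le).symm⟩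
  have h := hμ.prod_pow_sub_one_eq_order
  simp_rw [← geom_sum_mul μ, prod_mul_distrib, prod_const, card_range] at h
  set C := ∏ k ∈ range m, ∑ j ∈ range (k + 1), μ ^ j
  refine ⟨(-1) ^ (m + 1) * C, ?_, ?_⟩
  · push_cast [Nat.add_sub_cancel]
    linear_combination (-1 : K) * h
  · rw [Nat.add_sub_cancel] at hwilson
    calc ‖(-1) ^ (m + 1) * C - 1‖
        = ‖(-1) ^ (m + 1) * (C - m.factorial) + ((-1) ^ (m + 1) * (m.factorial : K) - 1)‖ := by
          ring_nf
      _ ≤ ‖μ - 1‖ := (norm_add_le_max _ _).trans <| max_le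
          (by simpa using norm_prod_geom_sum_sub_factorial_le hr1 m) hwilson

theorem existsUnique_pow_eq_neg_prime [CompleteSpace K] {p : ℕ} (hp : p.Prime)
    (hμ : IsPrimitiveRoot μ p) (hunit : ‖((p - 1 : ℕ) : K)‖ = 1) (hr1 : ‖μ - 1‖ < 1) :
    ∃! π : K, π ^ (p - 1) = -(p : K) ∧ ‖(1 + π) - μ‖ ≤ ‖μ - 1‖ * ‖μ - 1‖ := by
  set r := ‖μ - 1‖
  have hr0 : 0 < r := norm_pos_iff.mpr (sub_ne_zero.mpr (hμ.ne_one hp.one_lt))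
  obtain ⟨c, hc, hc1⟩ := hμ.exists_sub_one_pow_mul_eq_neg_prime hp
  obtain ⟨v, hv, hv1⟩ := exists_pow_eq_of_norm_sub_one_le hunit hr1 hc1
  have hπ : ((μ - 1) * v) ^ (p - 1) = -p := by rw [mul_pow, hv, hc]
  have hπμ : ‖(1 + (μ - 1) * v) - μ‖ ≤ r * r := by
    rw [show (1 + (μ - 1) * v) - μ = (μ - 1) * (v - 1) by ring, norm_mul]
    exact mul_le_mul_of_nonneg_left hv1 hr0.le
  refine ⟨(μ - 1) * v, ⟨hπ, hπμ⟩, fun π ⟨hπ', hπμ'⟩ => ?_⟩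
  refine eq_of_pow_eq_pow (hπ'.trans hπ.symm) hunit ?_
  calc ‖π - (μ - 1) * v‖ = ‖((1 + π) - μ) - ((1 + (μ - 1) * v) - μ)‖ := by ring_nf
    _ ≤ r * r := (norm_sub_le_max _ _).trans (max_le hπμ' hπμ)
    _ < r := mul_lt_of_lt_one_right hr0 hr1
    _ = ‖(μ - 1) * v‖ := by
      rw [norm_mul, norm_eq_one_of_norm_sub_one_lt_one (hv1.trans_lt hr1), mul_one]

end IsPrimitiveRoot

lemma Module.Finite.of_adjoin_singleton_eq_top {R A : Type*} [CommRing R] [CommRing A]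
    [Algebra R A] {x : A} (hx : IsIntegral R x) (h : Algebra.adjoin R {x} = ⊤) :
    Module.Finite R A := by
  have := Algebra.finite_adjoin_simple_of_isIntegral hx
  rw [h] at this
  exact Module.Finite.equiv Subalgebra.topEquiv.toLinearEquiv

lemma completeSpace_of_norm_algebraMap_eq {𝕜 K : Type*} [NontriviallyNormedField 𝕜]
    [CompleteSpace 𝕜] [NormedField K] [Algebra 𝕜 K] [FiniteDimensional 𝕜 K]
    (h : ∀ x : 𝕜, ‖algebraMap 𝕜 K x‖ = ‖x‖) : CompleteSpace K :=
  letI : NormedSpace 𝕜 K := ⟨fun c x => by rw [Algebra.smul_def, norm_mul, h]⟩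
  FiniteDimensional.complete 𝕜 K

lemma mul_self_eq_rpow_of_pow_eq_inv {r x : ℝ} {n : ℕ} (hr : 0 ≤ r) (hx : 0 ≤ x) (hn : n ≠ 0)
    (h : r ^ n = x⁻¹) : r * r = x ^ (-2 / (n : ℝ)) := by
  rw [← Real.pow_rpow_inv_natCast hr hn, h, Real.inv_rpow hx, ← Real.rpow_neg hx,
    ← Real.rpow_add' hx (by simp [hn])]
  ring_nf

theorem stmt_3_general (p : ℕ) [Fact p.Prime]
    (K : Type*) [NormedField K] [Algebra ℚ_[p] K]
    (hnorm : ∀ x : ℚ_[p], ‖algebraMap ℚ_[p] K x‖ = ‖x‖)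
    (μ : K) (hμ : IsPrimitiveRoot μ p)
    (hK : Algebra.adjoin ℚ_[p] ({μ} : Set K) = ⊤) :
    ∃! π : K, π ^ (p - 1) = -(p : K) ∧
      ‖(1 + π) - μ‖ ≤ (p : ℝ) ^ (-(2 : ℝ) / ((p : ℝ) - 1)) := by
  have hp : p.Prime := Fact.out
  have hcast (n : ℕ) : ‖(n : K)‖ = ‖(n : ℚ_[p])‖ := by
    rw [← map_natCast (algebraMap ℚ_[p] K), hnorm]
  have : IsUltrametricDist K := isUltrametricDist_of_forall_norm_natCast_le_one fun n =>
    (hcast n).trans_le (norm_natCast_le_one ℚ_[p] n)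
  have : Module.Finite ℚ_[p] K :=
    .of_adjoin_singleton_eq_top (hμ.isIntegral hp.pos).tower_top hK
  have : CompleteSpace K := completeSpace_of_norm_algebraMap_eq hnorm
  have hrp : ‖μ - 1‖ ^ (p - 1) = (p : ℝ)⁻¹ := by
    rw [hμ.norm_sub_one_pow_eq_norm_prime hp, hcast, Padic.norm_p]
  have hr1 : ‖μ - 1‖ < 1 := lt_of_pow_lt_pow_left₀ (p - 1) zero_le_one
    (by rw [hrp, one_pow]; exact inv_lt_one_of_one_lt₀ (by exact_mod_cast hp.one_lt))
  have hrr : ‖μ - 1‖ * ‖μ - 1‖ = (p : ℝ) ^ (-(2 : ℝ) / ((p : ℝ) - 1)) := by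
    have := mul_self_eq_rpow_of_pow_eq_inv (norm_nonneg _) (Nat.cast_nonneg p)
      (Nat.sub_ne_zero_of_lt hp.one_lt) hrp
    rwa [Nat.cast_sub hp.one_le, Nat.cast_one] at this
  rw [← hrr]
  exact hμ.existsUnique_pow_eq_neg_prime hp (by rw [hcast, Padic.norm_natCast_p_sub_one]) hr1

/-- Let `K = ℚ_p(μ)` where `μ` is a primitive `p`-th root of unity, `p` an odd prime,
with its (multiplicative, nonarchimedean) norm extending the one of `ℚ_p` (normalized
by `|p| = p⁻¹`).  Then there is a unique `π ∈ K` with `π^(p-1) = -p` and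
`|(1+π) - μ| ≤ p^(-2/(p-1))`. -/
theorem stmt_3 (p : ℕ) [Fact p.Prime] (hodd : Odd p)
    (K : Type*) [NormedField K] [Algebra ℚ_[p] K]
    (hnorm : ∀ x : ℚ_[p], ‖algebraMap ℚ_[p] K x‖ = ‖x‖)
    (μ : K) (hμ : IsPrimitiveRoot μ p)
    (hK : Algebra.adjoin ℚ_[p] ({μ} : Set K) = ⊤) :
    ∃! π : K, π ^ (p - 1) = -(p : K) ∧
      ‖(1 + π) - μ‖ ≤ (p : ℝ) ^ (-(2 : ℝ) / ((p : ℝ) - 1)) :=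
  stmt_3_general p K hnorm μ hμ hK
end

section
/- Let Φ(t) = Φ_m t^m + Φ_{m+1} t^{m+1} + ⋯ (m < 0 allowed) be a matrix-valued Laurent series solution of the Frobenius intertwining equation t∂t Φ + A(t)Φ(t) - pΦ(t)A(t^p) = 0, where A(t) = A_0 + A_1 t + ⋯ with A_0 nilpotent. Then all coefficients Φ_j with j < 0 vanish, i.e. Φ is a power series. -/
/-!
Compare coefficients in the lowest degree `j < 0` in which `Φ` might not vanish. All terms
`A_i Φ_{j-i}` and `Φ_{j-pi} A_i` with `i ≥ 1` drop out, leaving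
`j Φ_j + A₀ Φ_j - p Φ_j A₀ = 0`. The operator `X ↦ A₀ X - p X A₀` is nilpotent because `A₀`
is, so `j + (A₀ · - p · A₀)` is invertible for `j ≠ 0`, whence `Φ_j = 0`.
-/

theorem isNilpotent_mulLeft_sub_smul_mulRight {R A : Type*} [CommRing R] [Ring A] [Algebra R A]
    {a : A} (ha : IsNilpotent a) (q : R) :
    IsNilpotent (LinearMap.mulLeft R a - q • LinearMap.mulRight R a) := by
  obtain ⟨n, hn⟩ := ha
  have hl : IsNilpotent (LinearMap.mulLeft R a) :=
    ⟨n, by rw [LinearMap.pow_mulLeft, hn, LinearMap.mulLeft_zero_eq_zero]⟩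
  have hr : IsNilpotent (LinearMap.mulRight R a) :=
    ⟨n, by rw [LinearMap.pow_mulRight, hn, LinearMap.mulRight_zero_eq_zero]⟩
  exact ((LinearMap.commute_mulLeft_right a a).smul_right q).isNilpotent_sub hl (hr.smul q)

theorem Module.End.eq_zero_of_smul_add_apply_eq_zero {R M : Type*} [CommRing R] [AddCommGroup M]
    [Module R M] {L : Module.End R M} (hL : IsNilpotent L) {c : R} (hc : IsUnit c) {x : M}
    (h : c • x + L x = 0) : x = 0 := by
  have hunit : IsUnit (algebraMap R (Module.End R M) c + L) :=
    hL.isUnit_add_left_of_commute (hc.map _) (Algebra.commutes c L).symm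
  refine ((Module.End.isUnit_iff _).1 hunit).1 ?_
  simpa [Algebra.algebraMap_eq_smul_one] using h

theorem eq_zero_of_smul_add_mul_sub_smul_mul_eq_zero {R A : Type*} [CommRing R] [Ring A]
    [Algebra R A] {a : A} (ha : IsNilpotent a) {c : R} (hc : IsUnit c) (q : R) {x : A}
    (h : c • x + (a * x - q • (x * a)) = 0) : x = 0 :=
  Module.End.eq_zero_of_smul_add_apply_eq_zero (isNilpotent_mulLeft_sub_smul_mulRight ha q) hc
    (by simpa using h)

theorem Finset.sum_range_succ_eq_zeroth {M : Type*} [AddCommMonoid M] {f : ℕ → M} (n : ℕ)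
    (hf : ∀ i, i ≠ 0 → f i = 0) : ∑ i ∈ Finset.range (n + 1), f i = f 0 := by
  rw [Finset.sum_range_succ', Finset.sum_eq_zero (fun i _ => hf (i + 1) i.succ_ne_zero), zero_add]

theorem frobenius_coeff_eq_zero_of_forall_lt {K : Type*} [Field K] [CharZero K] {r : ℕ}
    {p : ℕ} (hp : p ≠ 0) {A : ℕ → Matrix (Fin r) (Fin r) K} (hA0 : IsNilpotent (A 0))
    {Φ : ℤ → Matrix (Fin r) (Fin r) K} {k : ℤ} (hk : k ≠ 0) (hlt : ∀ j < k, Φ j = 0) (n : ℕ)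
    (hΦ : (k : K) • Φ k
      + (∑ i ∈ Finset.range (n + 1), A i * Φ (k - (i : ℤ)))
      - (p : K) • (∑ i ∈ Finset.range (n + 1), Φ (k - (p : ℤ) * i) * A i) = 0) :
    Φ k = 0 := by
  have hleft : ∑ i ∈ Finset.range (n + 1), A i * Φ (k - (i : ℤ)) = A 0 * Φ k := by
    rw [Finset.sum_range_succ_eq_zeroth n fun i hi => by rw [hlt _ (by omega), mul_zero]]
    simp
  have hright : ∑ i ∈ Finset.range (n + 1), Φ (k - (p : ℤ) * i) * A i = Φ k * A 0 := by
    refine (Finset.sum_range_succ_eq_zeroth n fun i hi => ?_).trans (by simp)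
    have : 0 < (p : ℤ) * i := by positivity
    rw [hlt _ (by omega), zero_mul]
  rw [hleft, hright] at hΦ
  exact eq_zero_of_smul_add_mul_sub_smul_mul_eq_zero hA0 (Int.cast_ne_zero.2 hk).isUnit (p : K)
    (by linear_combination (norm := module) hΦ)

/-- A matrix-valued Laurent series solution `Φ(t) = ∑_{j ≥ m} Φ_j t^j` (with `m < 0`
allowed) of the Frobenius intertwining equation
`t∂t Φ + A(t)Φ(t) - pΦ(t)A(t^p) = 0`, where `A(t) = A₀ + A₁t + ⋯` with `A₀`
nilpotent, has vanishing coefficients in all negative degrees: `Φ_j = 0` for `j < 0`.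
The equation is written coefficientwise; the finite sums below contain all possibly
nonzero terms of the convolutions, since `Φ_j = 0` for `j < m`. -/
theorem stmt_6 (p : ℕ) (hp : p.Prime)
    (K : Type*) [Field K] [CharZero K] (r : ℕ)
    (A : ℕ → Matrix (Fin r) (Fin r) K) (hA0 : IsNilpotent (A 0))
    (m : ℤ)
    (Φ : ℤ → Matrix (Fin r) (Fin r) K)
    (hsupp : ∀ j : ℤ, j < m → Φ j = 0)
    (hΦ : ∀ k : ℤ, (k : K) • Φ k
      + (∑ i ∈ Finset.range ((k - m).toNat + 1), A i * Φ (k - (i : ℤ)))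
      - (p : K) • (∑ i ∈ Finset.range ((k - m).toNat + 1), Φ (k - (p : ℤ) * i) * A i)
      = 0) :
    ∀ j : ℤ, j < 0 → Φ j = 0 := by
  have hbelow : ∀ n, m ≤ n → n ≤ 0 → ∀ j < n, Φ j = 0 := by
    intro n hmn
    induction n, hmn using Int.leInduction with
    | base => exact fun _ => hsupp
    | succ n _ ih =>
      intro hn j hj
      have hΦn : Φ n = 0 :=
        frobenius_coeff_eq_zero_of_forall_lt hp.ne_zero hA0 (by omega) (ih (by omega)) _ (hΦ n)
      rcases (Int.lt_add_one_iff.1 hj).lt_or_eq with hj | rfl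
      exacts [ih (by omega) j hj, hΦn]
  intro j hj
  rcases lt_or_ge j m with hjm | hjm
  exacts [hsupp j hjm, hbelow 0 (by omega) le_rfl j hj]
end

section
/- Let g(q) = Σ_k a_k q^k be a power series over Q_p converging on a closed disc of radius p^{-1/(p-1)} (i.e. v_p(a_k) - k/(p-1) → ∞). Let π be an element with π^{p-1} = -p, and let θ, θ' be (p-1)-st roots of unity in Z_p. Then v(g(πθ)) = v(g(πθ')). -/
/-!
Put `n = p - 1`. Grouping the exponents by their residue mod `n` and using `(πθ)^n = -p` gives
`g(πθ) = ∑_{j mod n} (πθ)^j T_j` with `T_j = ∑_m a_{j+nm} (-p)^m ∈ ℚ_p` independent of `θ`.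
As `|θ| = 1` and `|π|^n = 1/p`, a nonzero `j`-th term has norm `|π|^j |T_j| ∈ p^(-j/n) p^ℤ`, and
these cosets are distinct for distinct `j`. By the ultrametric inequality the norm of the sum is
then the largest norm of a term, which does not involve `θ`.
-/

open Filter Finset Topology

namespace IsUltrametricDist

variable {ι E : Type*} [SeminormedAddCommGroup E] [IsUltrametricDist E]

theorem nnnorm_sum_eq_sup_of_pairwise_ne_of_ne_zero {s : Finset ι} {f : ι → E}
    (hs : Set.Pairwise {i | i ∈ s ∧ f i ≠ 0} fun i j ↦ ‖f i‖₊ ≠ ‖f j‖₊) :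
    ‖∑ i ∈ s, f i‖₊ = s.sup fun i ↦ ‖f i‖₊ := by
  classical
  rw [← sum_filter_ne_zero, nnnorm_sum_eq_sup_of_pairwise_ne (by simpa using hs)]
  refine le_antisymm (sup_mono (filter_subset _ _)) (Finset.sup_le fun i hi ↦ ?_)
  by_cases hfi : f i = 0
  · simp [hfi]
  · exact le_sup (f := fun i ↦ ‖f i‖₊) (mem_filter.2 ⟨hi, hfi⟩)

theorem summable_of_tendsto_norm_zero [CompleteSpace E] {f : ℕ → E}
    (hf : Tendsto (fun k ↦ ‖f k‖) atTop (𝓝 0)) : Summable f := by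
  refine NonarchimedeanAddGroup.summable_of_tendsto_cofinite_zero ?_
  rwa [Nat.cofinite_eq_atTop, tendsto_zero_iff_norm_tendsto_zero]

end IsUltrametricDist

theorem tsum_algebraMap_mul_pow_eq_sum_zmod {F K : Type*} [Field F] [TopologicalSpace F]
    [NormedField K] [CompleteSpace K] [Algebra F K] (hA : IsClosedEmbedding (algebraMap F K))
    {a : ℕ → F} {x : K} {c : F} {n : ℕ} [NeZero n] (hx : x ^ n = algebraMap F K c)
    (hf : Summable fun k ↦ algebraMap F K (a k) * x ^ k) :
    ∑' k, algebraMap F K (a k) * x ^ k =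
      ∑ j : ZMod n, x ^ j.val * algebraMap F K (∑' m, a (j.val + n * m) * c ^ m) := by
  rw [Nat.sumByResidueClasses hf n]
  refine sum_congr rfl fun j _ ↦ ?_
  rw [hA.map_tsum, ← tsum_mul_left]
  congr 1 with m
  rw [map_mul, map_pow, ← hx, pow_add, pow_mul]
  ring

theorem Real.pow_eq_rpow_neg_div_of_pow_eq_inv {r b : ℝ} (hr : 0 ≤ r) (hb : 0 < b) {n : ℕ}
    (hn : n ≠ 0) (h : r ^ n = b⁻¹) (k : ℕ) : r ^ k = b ^ (-(k : ℝ) / n) := by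
  rw [← Real.pow_rpow_inv_natCast hr hn, h, ← Real.rpow_natCast, Real.inv_rpow hb.le,
    ← Real.rpow_neg hb.le, ← Real.rpow_mul hb.le]
  congr 1
  ring

theorem Padic.natCast_eq_of_pow_mul_norm_eq {p : ℕ} [Fact p.Prime] {n : ℕ} {r : ℝ}
    (hr : r ^ n = (p : ℝ)⁻¹) {i j : ℕ} {s t : ℚ_[p]} (hs : s ≠ 0) (ht : t ≠ 0)
    (h : r ^ i * ‖s‖ = r ^ j * ‖t‖) : (i : ZMod n) = j := by
  have hp : (1 : ℝ) < p := by exact_mod_cast (Fact.out : p.Prime).one_lt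
  have hpow : ∀ (k : ℕ) (u : ℚ_[p]), u ≠ 0 →
      (r ^ k * ‖u‖) ^ n = (p : ℝ) ^ (-((k : ℤ) + n * u.valuation)) := by
    intro k u hu
    rw [mul_pow, pow_right_comm, hr, Padic.norm_eq_zpow_neg_valuation hu, ← zpow_natCast,
      ← zpow_natCast, ← zpow_mul, inv_zpow', ← zpow_add₀ (by positivity)]
    ring_nf
  have hexp := zpow_right_injective₀ (by positivity) hp.ne'
    ((hpow i s hs).symm.trans ((congrArg (· ^ n) h).trans (hpow j t ht)))
  have := congrArg (Int.cast : ℤ → ZMod n) hexp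
  push_cast [ZMod.natCast_self] at this
  linear_combination -this

section PowerSeries

variable {p : ℕ} [Fact p.Prime] {K : Type*} [NormedField K] [Algebra ℚ_[p] K]

theorem norm_pow_eq_inv_of_pow_eq_neg (hnorm : ∀ x : ℚ_[p], ‖algebraMap ℚ_[p] K x‖ = ‖x‖)
    {n : ℕ} {π : K} (hπ : π ^ n = -(p : K)) : ‖π‖ ^ n = (p : ℝ)⁻¹ := by
  rw [← norm_pow, hπ, norm_neg, ← map_natCast (algebraMap ℚ_[p] K), hnorm, Padic.norm_p]

theorem nnnorm_tsum_mul_pow_eq_sup [CompleteSpace K] [IsUltrametricDist K]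
    (hnorm : ∀ x : ℚ_[p], ‖algebraMap ℚ_[p] K x‖ = ‖x‖) {n : ℕ} [NeZero n] {π : K}
    (hπ : π ^ n = -(p : K)) {a : ℕ → ℚ_[p]} (ha : Tendsto (fun k ↦ ‖a k‖ * ‖π‖ ^ k) atTop (𝓝 0))
    {θ : ℚ_[p]} (hθ : θ ^ n = 1) :
    ‖∑' k, algebraMap ℚ_[p] K (a k) * (π * algebraMap ℚ_[p] K θ) ^ k‖₊ =
      univ.sup fun j : ZMod n ↦
        ‖π‖₊ ^ j.val * ‖∑' m, a (j.val + n * m) * (-(p : ℚ_[p])) ^ m‖₊ := by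
  set A := algebraMap ℚ_[p] K
  have hθ1 : ‖A θ‖ = 1 := by
    rw [hnorm]
    exact (isOfFinOrder_iff_pow_eq_one.2 ⟨n, NeZero.pos n, hθ⟩).norm_eq_one
  have hx : (π * A θ) ^ n = A (-p) := by
    rw [mul_pow, hπ, ← map_pow, hθ, map_one, mul_one, map_neg, map_natCast]
  have hf : Summable fun k ↦ A (a k) * (π * A θ) ^ k :=
    IsUltrametricDist.summable_of_tendsto_norm_zero (by simpa [hθ1, hnorm] using ha)
  set T : ZMod n → ℚ_[p] := fun j ↦ ∑' m, a (j.val + n * m) * (-(p : ℚ_[p])) ^ m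
  have hterm (j : ZMod n) : ‖(π * A θ) ^ j.val * A (T j)‖₊ = ‖π‖₊ ^ j.val * ‖T j‖₊ := by
    simp [← NNReal.coe_inj, hθ1, hnorm]
  rw [tsum_algebraMap_mul_pow_eq_sum_zmod
    (AddMonoidHomClass.isometry_of_norm A hnorm).isClosedEmbedding hx hf,
    IsUltrametricDist.nnnorm_sum_eq_sup_of_pairwise_ne_of_ne_zero]
  · exact sup_congr rfl fun j _ ↦ hterm j
  · rintro i ⟨-, hi⟩ j ⟨-, hj⟩ hij heq
    refine hij ?_
    rw [hterm, hterm, ← NNReal.coe_inj] at heq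
    push_cast at heq
    simpa using Padic.natCast_eq_of_pow_mul_norm_eq (norm_pow_eq_inv_of_pow_eq_neg hnorm hπ)
      ((map_ne_zero A).1 (right_ne_zero_of_mul hi)) ((map_ne_zero A).1 (right_ne_zero_of_mul hj))
      heq

end PowerSeries

/-- Let `g(q) = ∑ a_k q^k` be a power series over `ℚ_p` converging on the closed disc
of radius `p^(-1/(p-1))` (i.e. `‖a_k‖·p^(-k/(p-1)) → 0`).  Let `π` be an element of a
complete nonarchimedean normed field extension `K` of `ℚ_p` with `π^(p-1) = -p`, and
let `θ, θ'` be `(p-1)`-st roots of unity in `ℚ_p`.  Then `g(πθ)` and `g(πθ')` have the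
same valuation, i.e. the same norm. -/
theorem stmt_8 (p : ℕ) [Fact p.Prime]
    (K : Type*) [NormedField K] [CompleteSpace K] [IsUltrametricDist K]
    [Algebra ℚ_[p] K]
    (hnorm : ∀ x : ℚ_[p], ‖algebraMap ℚ_[p] K x‖ = ‖x‖)
    (π : K) (hπ : π ^ (p - 1) = -(p : K))
    (a : ℕ → ℚ_[p])
    (ha : Filter.Tendsto (fun k : ℕ => ‖a k‖ * (p : ℝ) ^ (-(k : ℝ) / ((p : ℝ) - 1)))
      Filter.atTop (nhds 0))
    (θ θ' : ℚ_[p]) (hθ : θ ^ (p - 1) = 1) (hθ' : θ' ^ (p - 1) = 1) :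
    ‖∑' k : ℕ, algebraMap ℚ_[p] K (a k) * (π * algebraMap ℚ_[p] K θ) ^ k‖ =
    ‖∑' k : ℕ, algebraMap ℚ_[p] K (a k) * (π * algebraMap ℚ_[p] K θ') ^ k‖ := by
  have hp := (Fact.out : p.Prime).one_lt
  have : NeZero (p - 1) := ⟨by omega⟩
  have hconv : Tendsto (fun k ↦ ‖a k‖ * ‖π‖ ^ k) atTop (𝓝 0) := by
    refine ha.congr fun k ↦ ?_
    rw [Real.pow_eq_rpow_neg_div_of_pow_eq_inv (norm_nonneg π) (by positivity) (NeZero.ne _)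
      (norm_pow_eq_inv_of_pow_eq_neg hnorm hπ), Nat.cast_sub hp.le, Nat.cast_one]
  rw [← coe_nnnorm, ← coe_nnnorm, nnnorm_tsum_mul_pow_eq_sup hnorm hπ hconv hθ,
    nnnorm_tsum_mul_pow_eq_sup hnorm hπ hconv hθ']
end
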